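/- arXiv:1401.1625 — 3 statements merged into one kernel-verified Lean document; each statement's English description precedes it below -/
import Mathlib

section
/- For every positive integer n, the Bell number B_n equals the sum over k from 1 to n of (-1)^(n-k) times (the sum over ℓ from 1 to k of the Lah number L(k,ℓ)) times the Stirling number of the second kind S(n,k). -/
/-!
The recurrence `L(k+1, ℓ+1) = L(k, ℓ) + (k + ℓ + 1) L(k, ℓ+1)` is satisfied by the Lah
numbers and by the convolution `∑ j, c(k, j) S(j, ℓ)` of the unsigned Stirling numbers of the
two kinds, so the two agree for `k ≥ 1`. As `B_j = ∑ ℓ, S(j, ℓ)`, summing over `ℓ` gives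
`∑ ℓ, L(k, ℓ) = ∑ j, c(k, j) B_j`, and the claim becomes Stirling inversion: the matrices
`S(n, k)` and `(-1)^(k + j) c(k, j)` are mutually inverse.
-/

open Finset

/-- Stirling numbers of the second kind. -/
def stirling : ℕ → ℕ → ℕ
  | 0, 0 => 1
  | 0, _ + 1 => 0
  | _ + 1, 0 => 0
  | n + 1, k + 1 => stirling n k + (k + 1) * stirling n (k + 1)

/-- Bell numbers, via the standard binomial recurrence. -/
def bell : ℕ → ℕ
  | 0 => 1
  | n + 1 => ∑ k ∈ (Finset.range (n + 1)).attach, Nat.choose n k.1 * bell k.1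
decreasing_by exact Nat.lt_succ_of_le (Nat.lt_succ_iff.mp (Finset.mem_range.mp k.2))

/-- Lah numbers: L(n,k) = C(n-1,k-1) · n!/k! for k ≥ 1, L(0,0)=1, L(n,0)=0 for n ≥ 1. -/
def lah (n k : ℕ) : ℕ :=
  if k = 0 then (if n = 0 then 1 else 0)
  else (n - 1).choose (k - 1) * Nat.factorial n / Nat.factorial k

open Nat

theorem sum_range_succ_eq_add_sum_Icc {M : Type*} [AddCommMonoid M] (f : ℕ → M) (n : ℕ) :
    ∑ k ∈ range (n + 1), f k = f 0 + ∑ k ∈ Icc 1 n, f k := by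
  rw [Nat.range_succ_eq_Icc_zero, ← insert_Icc_add_one_left_eq_Icc n.zero_le,
    sum_insert (by simp), zero_add]

theorem stirling_eq_stirlingSecond : ∀ n k, stirling n k = stirlingSecond n k
  | 0, 0 | 0, _ + 1 | _ + 1, 0 => rfl
  | n + 1, k + 1 => by
    rw [stirling, stirlingSecond_succ_succ, stirling_eq_stirlingSecond n k,
      stirling_eq_stirlingSecond n (k + 1), add_comm]

theorem sum_range_stirlingSecond_of_le {n N : ℕ} (h : n ≤ N) :
    ∑ k ∈ range (N + 1), stirlingSecond n k = ∑ k ∈ range (n + 1), stirlingSecond n k := by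
  refine (sum_subset (range_subset_range.mpr (by omega)) fun k _ hk => ?_).symm
  exact stirlingSecond_eq_zero_of_lt (by simpa using hk)

theorem stirlingSecond_succ_succ_eq_sum_choose (n k : ℕ) :
    stirlingSecond (n + 1) (k + 1) = ∑ m ∈ range (n + 1), n.choose m * stirlingSecond m k := by
  induction n generalizing k with
  | zero => cases k <;> rfl
  | succ n ih =>
    have pascal := sum_choose_succ_mul (R := ℕ) (fun m _ => stirlingSecond m k) n
    simp only [Nat.cast_id] at pascal
    rw [pascal, ← ih]
    cases k with
    | zero => simp [stirlingSecond_one_right]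
    | succ k =>
      simp only [stirlingSecond_succ_succ, mul_add, sum_add_distrib, mul_left_comm _ (k + 1),
        ← mul_sum, ← ih]
      ring

theorem bell_eq_sum_stirlingSecond (n : ℕ) :
    bell n = ∑ k ∈ range (n + 1), stirlingSecond n k := by
  induction n using Nat.strong_induction_on with
  | _ n ih =>
    cases n with
    | zero => simp [bell]
    | succ n =>
      rw [bell, sum_attach (range (n + 1)) (fun m => n.choose m * bell m),
        sum_range_succ' (stirlingSecond (n + 1)),
        stirlingSecond_succ_zero, add_zero]
      simp_rw [stirlingSecond_succ_succ_eq_sum_choose]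
      rw [sum_comm]
      refine sum_congr rfl fun m hm => ?_
      have hmn : m ≤ n := mem_range_succ_iff.mp hm
      rw [ih m (by omega), ← sum_range_stirlingSecond_of_le hmn, mul_sum]

def signedStirlingFirst (n k : ℕ) : ℤ := (-1) ^ (n + k) * stirlingFirst n k

theorem signedStirlingFirst_succ_succ (n k : ℕ) :
    signedStirlingFirst (n + 1) (k + 1) =
      signedStirlingFirst n k - n * signedStirlingFirst n (k + 1) := by
  simp only [signedStirlingFirst, stirlingFirst_succ_succ, pow_succ, ← add_assoc,
    Nat.add_right_comm n 1 k]
  push_cast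
  ring

theorem signedStirlingFirst_succ_zero (n : ℕ) : signedStirlingFirst (n + 1) 0 = 0 := by
  simp [signedStirlingFirst]

theorem sum_stirlingSecond_mul_signedStirlingFirst (n j : ℕ) :
    ∑ k ∈ range (n + 1), (stirlingSecond n k : ℤ) * signedStirlingFirst k j =
      if n = j then 1 else 0 := by
  induction n generalizing j with
  | zero => cases j <;> simp [signedStirlingFirst]
  | succ n ih =>
    rw [sum_range_succ', stirlingSecond_succ_zero, Nat.cast_zero, zero_mul, add_zero]
    cases j with
    | zero => simp [signedStirlingFirst_succ_zero]
    | succ j =>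
      have shift : ∑ k ∈ range (n + 1),
            ((k + 1) * stirlingSecond n (k + 1) : ℤ) * signedStirlingFirst (k + 1) (j + 1) =
          ∑ k ∈ range (n + 1),
            (k * stirlingSecond n k : ℤ) * signedStirlingFirst k (j + 1) := by
        have h := sum_range_succ' (fun k => (k * stirlingSecond n k : ℤ) *
          signedStirlingFirst k (j + 1)) (n + 1)
        rw [sum_range_succ, stirlingSecond_eq_zero_of_lt (Nat.lt_succ_self n)] at h
        push_cast at h
        simpa using h.symm
      calc ∑ k ∈ range (n + 1),
            (stirlingSecond (n + 1) (k + 1) : ℤ) * signedStirlingFirst (k + 1) (j + 1)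
          = ∑ k ∈ range (n + 1), ((stirlingSecond n k : ℤ) * signedStirlingFirst k j +
              (((k + 1) * stirlingSecond n (k + 1) : ℤ) * signedStirlingFirst (k + 1) (j + 1) -
                (k * stirlingSecond n k : ℤ) * signedStirlingFirst k (j + 1))) := by
            refine sum_congr rfl fun k _ => ?_
            rw [stirlingSecond_succ_succ, signedStirlingFirst_succ_succ]
            push_cast
            ring
        _ = if n + 1 = j + 1 then 1 else 0 := by
            rw [sum_add_distrib, sum_sub_distrib, shift, sub_self, add_zero, ih]
            simp

theorem neg_one_pow_sub_eq_mul {R : Type*} [Monoid R] [HasDistribNeg R] {k n : ℕ} (h : k ≤ n)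
    (j : ℕ) : (-1 : R) ^ (n - k) = (-1) ^ (n + j) * (-1) ^ (k + j) := by
  obtain ⟨d, rfl⟩ := Nat.exists_eq_add_of_le h
  calc (-1 : R) ^ (k + d - k)
      = (-1) ^ d * (-1) ^ (k + j + (k + j)) := by
        rw [(Even.add_self _).neg_one_pow, mul_one, Nat.add_sub_cancel_left]
    _ = (-1) ^ (k + d + j) * (-1) ^ (k + j) := by
        rw [← pow_add, ← pow_add]
        congr 1
        omega

theorem sum_neg_one_pow_mul_stirlingSecond_mul_stirlingFirst (n j : ℕ) :
    ∑ k ∈ range (n + 1), (-1 : ℤ) ^ (n - k) * stirlingSecond n k * stirlingFirst k j =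
      if n = j then 1 else 0 := by
  have sign : ∀ k ∈ range (n + 1),
      (-1 : ℤ) ^ (n - k) * stirlingSecond n k * stirlingFirst k j =
        (-1) ^ (n + j) * (stirlingSecond n k * signedStirlingFirst k j) := fun k hk => by
    rw [neg_one_pow_sub_eq_mul (mem_range_succ_iff.mp hk) j, signedStirlingFirst]
    ring
  rw [sum_congr rfl sign, ← mul_sum, sum_stirlingSecond_mul_signedStirlingFirst]
  split_ifs with h
  · rw [h, mul_one, (Even.add_self j).neg_one_pow]
  · rw [mul_zero]

theorem stirling_inversion {R : Type*} [CommRing R] (f : ℕ → R) (n : ℕ) :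
    ∑ k ∈ range (n + 1),
      (-1) ^ (n - k) * (stirlingSecond n k : R) * ∑ j ∈ range (k + 1), stirlingFirst k j * f j =
      f n := by
  have extend : ∀ k ∈ range (n + 1), ∑ j ∈ range (k + 1), (stirlingFirst k j : R) * f j =
      ∑ j ∈ range (n + 1), (stirlingFirst k j : R) * f j := fun k hk => by
    refine sum_subset (range_subset_range.mpr (mem_range.mp hk)) fun j _ hj => ?_
    rw [stirlingFirst_eq_zero_of_lt (by simpa using hj), Nat.cast_zero, zero_mul]
  have orthogonality : ∀ j, ∑ k ∈ range (n + 1),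
      (-1) ^ (n - k) * (stirlingSecond n k : R) * stirlingFirst k j = if n = j then 1 else 0 :=
    fun j => by
      simpa using congrArg (Int.cast : ℤ → R)
        (sum_neg_one_pow_mul_stirlingSecond_mul_stirlingFirst n j)
  rw [sum_congr rfl fun k hk => by rw [extend k hk, mul_sum], sum_comm]
  simp_rw [← mul_assoc, ← sum_mul, orthogonality, ite_mul, one_mul, zero_mul]
  rw [sum_ite_eq, if_pos (self_mem_range_succ n)]

theorem lah_succ_succ_mul_factorial (m i : ℕ) :
    lah (m + 1) (i + 1) * (i + 1)! = m.choose i * (m + 1)! := by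
  rw [lah, if_neg (succ_ne_zero i), Nat.add_sub_cancel, Nat.add_sub_cancel]
  refine Nat.div_mul_cancel ?_
  rcases le_or_gt i m with h | h
  · exact Dvd.dvd.mul_left (factorial_dvd_factorial (by omega)) _
  · rw [choose_eq_zero_of_lt h, zero_mul]
    exact dvd_zero _

theorem lah_succ_zero (n : ℕ) : lah (n + 1) 0 = 0 := rfl

theorem lah_succ_one (n : ℕ) : lah (n + 1) 1 = (n + 1)! := by
  simpa using lah_succ_succ_mul_factorial n 0

theorem lah_succ_succ {n : ℕ} (hn : 1 ≤ n) (ℓ : ℕ) :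
    lah (n + 1) (ℓ + 1) = lah n ℓ + (n + ℓ + 1) * lah n (ℓ + 1) := by
  obtain ⟨m, rfl⟩ := Nat.exists_eq_add_of_le' hn
  cases ℓ with
  | zero => rw [lah_succ_zero, lah_succ_one, lah_succ_one, factorial_succ (m + 1)]; ring
  | succ i =>
    have binomial : (m + 2) * (m + 1).choose (i + 1) =
        (i + 2) * m.choose i + (m + i + 3) * m.choose (i + 1) := by
      -- after Pascal's rule this is `(m - i) C(m, i) = (i + 1) C(m, i + 1)`
      rw [choose_succ_succ]
      rcases le_or_gt i m with h | h
      · obtain ⟨d, rfl⟩ := Nat.exists_eq_add_of_le h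
        have := choose_succ_right_eq (i + d) i
        rw [Nat.add_sub_cancel_left] at this
        nlinarith
      · simp [choose_eq_zero_of_lt h, choose_eq_zero_of_lt (Nat.lt_succ_of_lt h)]
    refine Nat.eq_of_mul_eq_mul_right (factorial_pos (i + 2)) ?_
    calc lah (m + 1 + 1) (i + 1 + 1) * (i + 2)!
        = (m + 1)! * ((m + 2) * (m + 1).choose (i + 1)) := by
          rw [lah_succ_succ_mul_factorial, factorial_succ (m + 1)]
          ring
      _ = (m + 1)! * ((i + 2) * m.choose i + (m + i + 3) * m.choose (i + 1)) := by rw [binomial]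
      _ = (lah (m + 1) (i + 1) + (m + 1 + (i + 1) + 1) * lah (m + 1) (i + 1 + 1)) *
            (i + 2)! := by
          rw [add_mul (lah (m + 1) (i + 1)), mul_assoc _ (lah _ _), lah_succ_succ_mul_factorial,
            factorial_succ (i + 1), mul_left_comm (lah _ _), lah_succ_succ_mul_factorial]
          ring

theorem sum_stirlingFirst_mul_stirlingSecond_succ_succ (n ℓ : ℕ) :
    ∑ j ∈ range (n + 2), stirlingFirst (n + 1) j * stirlingSecond j (ℓ + 1) =
      ∑ j ∈ range (n + 1), stirlingFirst n j * stirlingSecond j ℓ +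
        (n + ℓ + 1) * ∑ j ∈ range (n + 1), stirlingFirst n j * stirlingSecond j (ℓ + 1) := by
  have shift : ∑ j ∈ range (n + 1), stirlingFirst n (j + 1) * stirlingSecond (j + 1) (ℓ + 1) =
      ∑ j ∈ range (n + 1), stirlingFirst n j * stirlingSecond j (ℓ + 1) := by
    have h := sum_range_succ' (fun j => stirlingFirst n j * stirlingSecond j (ℓ + 1)) (n + 1)
    rw [sum_range_succ, stirlingFirst_eq_zero_of_lt (Nat.lt_succ_self n)] at h
    simpa using h.symm
  rw [sum_range_succ', stirlingFirst_succ_zero, zero_mul, add_zero]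
  calc ∑ j ∈ range (n + 1), stirlingFirst (n + 1) (j + 1) * stirlingSecond (j + 1) (ℓ + 1)
      = ∑ j ∈ range (n + 1), (stirlingFirst n j * stirlingSecond j ℓ +
          (ℓ + 1) * (stirlingFirst n j * stirlingSecond j (ℓ + 1)) +
            n * (stirlingFirst n (j + 1) * stirlingSecond (j + 1) (ℓ + 1))) := by
        refine sum_congr rfl fun j _ => ?_
        rw [stirlingFirst_succ_succ, stirlingSecond_succ_succ]
        ring
    _ = _ := by
        rw [sum_add_distrib, sum_add_distrib, ← mul_sum, ← mul_sum, shift]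
        ring

theorem lah_eq_sum_stirlingFirst_mul_stirlingSecond {n : ℕ} (hn : 1 ≤ n) (ℓ : ℕ) :
    lah n ℓ = ∑ j ∈ range (n + 1), stirlingFirst n j * stirlingSecond j ℓ := by
  induction n, hn using Nat.le_induction generalizing ℓ with
  | base => rcases ℓ with _ | _ | ℓ <;> simp [lah, sum_range_succ, stirlingFirst, stirlingSecond]
  | succ n hn ih =>
    cases ℓ with
    | zero =>
      refine (sum_eq_zero fun j _ => ?_).symm
      cases j <;> simp
    | succ ℓ => rw [lah_succ_succ hn, sum_stirlingFirst_mul_stirlingSecond_succ_succ, ih, ih]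

theorem sum_lah_eq_sum_stirlingFirst_mul_bell {n : ℕ} (hn : 1 ≤ n) :
    ∑ ℓ ∈ Icc 1 n, lah n ℓ = ∑ j ∈ range (n + 1), stirlingFirst n j * bell j := by
  have lah_zero : lah n 0 = 0 := by simp [lah, Nat.one_le_iff_ne_zero.mp hn]
  rw [← zero_add (∑ ℓ ∈ Icc 1 n, lah n ℓ), ← lah_zero, ← sum_range_succ_eq_add_sum_Icc]
  simp_rw [lah_eq_sum_stirlingFirst_mul_stirlingSecond hn]
  rw [sum_comm]
  refine sum_congr rfl fun j hj => ?_
  rw [bell_eq_sum_stirlingSecond, ← sum_range_stirlingSecond_of_le (mem_range_succ_iff.mp hj),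
    mul_sum]

theorem bell_eq_sum_lah_stirling (n : ℕ) (hn : 1 ≤ n) :
    (bell n : ℤ) =
      ∑ k ∈ Finset.Icc 1 n,
        (-1 : ℤ) ^ (n - k) * (∑ ℓ ∈ Finset.Icc 1 k, (lah k ℓ : ℤ)) * stirling n k := by
  have sum_lah : ∀ k ∈ Icc 1 n, ∑ ℓ ∈ Icc 1 k, (lah k ℓ : ℤ) =
      ∑ j ∈ range (k + 1), (stirlingFirst k j : ℤ) * bell j := fun k hk => by
    exact_mod_cast sum_lah_eq_sum_stirlingFirst_mul_bell (mem_Icc.mp hk).1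
  have stirlingSecond_zero : stirlingSecond n 0 = 0 := by
    obtain ⟨m, rfl⟩ := Nat.exists_eq_add_of_le' hn
    rfl
  rw [sum_congr rfl fun k hk => by rw [sum_lah k hk, stirling_eq_stirlingSecond, mul_right_comm],
    ← stirling_inversion (fun j => (bell j : ℤ)) n, sum_range_succ_eq_add_sum_Icc,
    stirlingSecond_zero, Nat.cast_zero, mul_zero, zero_mul, zero_add]
end

section
/- The function e^(e^x - 1) is the exponential generating function of the Bell numbers: for all real x, e^(e^x - 1) = Σ_{k=0}^{∞} B_k · x^k / k!, where B_k is the k-th Bell number. -/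
open Finset

/-!
Dobinski's formula `∑ₙ nᵏ / n! = e · B_k` follows by strong induction on `k`: shifting the index
turns `∑ₙ nᵏ⁺¹ / n!` into `∑ₙ (n + 1)ᵏ / n!`, and expanding `(n + 1)ᵏ` binomially reproduces the
recurrence of the Bell numbers. Hence
`e · ∑ₖ B_k xᵏ / k! = ∑ₖ ∑ₙ (n x)ᵏ / (k! n!) = ∑ₙ e^{n x} / n! = exp (eˣ)`,
the interchange of summations being justified by absolute convergence.
-/

open scoped Nat

lemma bell_succ_eq_sum (n : ℕ) :
    bell (n + 1) = ∑ k ∈ range (n + 1), n.choose k * bell k := by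
  rw [bell, sum_attach (range (n + 1)) fun k => n.choose k * bell k]

lemma Real.exp_eq_tsum_pow_div_factorial (x : ℝ) : Real.exp x = ∑' n : ℕ, x ^ n / n ! := by
  rw [Real.exp_eq_exp_ℝ, NormedSpace.exp_eq_tsum_div]

lemma summable_natCast_mul_pow_div_factorial_of_nonneg {t : ℝ} (ht : 0 ≤ t) :
    Summable fun p : ℕ × ℕ => ((p.1 : ℝ) * t) ^ p.2 / p.2 ! / p.1 ! := by
  have row_sum (n : ℕ) : ∑' k : ℕ, ((n : ℝ) * t) ^ k / k ! / n ! = Real.exp t ^ n / n ! := by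
    rw [tsum_div_const, ← Real.exp_eq_tsum_pow_div_factorial, Real.exp_nat_mul]
  rw [summable_prod_of_nonneg fun p => by positivity]
  exact ⟨fun n => (Real.summable_pow_div_factorial ((n : ℝ) * t)).div_const (n ! : ℝ),
    (Real.summable_pow_div_factorial (Real.exp t)).congr fun n => (row_sum n).symm⟩

lemma summable_natCast_mul_pow_div_factorial (t : ℝ) :
    Summable fun p : ℕ × ℕ => ((p.1 : ℝ) * t) ^ p.2 / p.2 ! / p.1 ! := by
  refine Summable.of_norm ((summable_natCast_mul_pow_div_factorial_of_nonneg (abs_nonneg t)).congr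
    fun p => ?_)
  simp

lemma summable_natCast_pow_div_factorial (k : ℕ) :
    Summable fun n : ℕ => (n : ℝ) ^ k / n ! := by
  refine ((summable_natCast_mul_pow_div_factorial 1).prod_symm.prod_factor k).mul_left (k ! : ℝ)
    |>.congr fun n => ?_
  dsimp only [Prod.swap_prod_mk]
  field_simp

lemma tsum_natCast_pow_succ_div_factorial (k : ℕ) :
    ∑' n : ℕ, (n : ℝ) ^ (k + 1) / n ! = ∑' n : ℕ, ((n : ℝ) + 1) ^ k / n ! := by
  rw [(summable_natCast_pow_div_factorial (k + 1)).tsum_eq_zero_add]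
  simp only [Nat.cast_zero, zero_pow k.succ_ne_zero, zero_div, zero_add]
  refine tsum_congr fun n => ?_
  rw [Nat.factorial_succ, Nat.cast_mul, pow_succ', Nat.cast_succ]
  field_simp

theorem tsum_natCast_pow_div_factorial (k : ℕ) :
    ∑' n : ℕ, (n : ℝ) ^ k / n ! = Real.exp 1 * bell k := by
  induction k using Nat.strong_induction_on with
  | _ k ih =>
  cases k with
  | zero => simp [bell, Real.exp_eq_tsum_pow_div_factorial]
  | succ k =>
    have binomial (n : ℕ) : ((n : ℝ) + 1) ^ k / n ! =
        ∑ j ∈ range (k + 1), (k.choose j : ℝ) * ((n : ℝ) ^ j / n !) := by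
      rw [add_pow, sum_div]
      exact sum_congr rfl fun j _ => by ring
    calc ∑' n : ℕ, (n : ℝ) ^ (k + 1) / n !
        = ∑' n : ℕ, ∑ j ∈ range (k + 1), (k.choose j : ℝ) * ((n : ℝ) ^ j / n !) := by
          rw [tsum_natCast_pow_succ_div_factorial]
          exact tsum_congr binomial
      _ = ∑ j ∈ range (k + 1), (k.choose j : ℝ) * ∑' n : ℕ, (n : ℝ) ^ j / n ! := by
          rw [Summable.tsum_finsetSum fun j _ => (summable_natCast_pow_div_factorial j).mul_left _]
          simp only [tsum_mul_left]
      _ = Real.exp 1 * bell (k + 1) := by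
          rw [bell_succ_eq_sum, Nat.cast_sum, mul_sum]
          refine sum_congr rfl fun j hj => ?_
          rw [ih j (by simpa using hj)]
          push_cast
          ring

theorem bell_egf (x : ℝ) :
    Real.exp (Real.exp x - 1) =
      ∑' k : ℕ, (bell k : ℝ) * x ^ k / (Nat.factorial k : ℝ) := by
  suffices Real.exp 1 * ∑' k : ℕ, (bell k : ℝ) * x ^ k / k ! = Real.exp (Real.exp x) by
    rw [Real.exp_sub, ← this]
    field_simp
  calc Real.exp 1 * ∑' k : ℕ, (bell k : ℝ) * x ^ k / k !
      = ∑' (k : ℕ) (n : ℕ), ((n : ℝ) * x) ^ k / k ! / n ! := by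
        rw [← tsum_mul_left]
        refine tsum_congr fun k => ?_
        rw [mul_div_assoc, ← mul_assoc, ← tsum_natCast_pow_div_factorial, ← tsum_mul_right]
        exact tsum_congr fun n => by ring
    _ = ∑' (n : ℕ) (k : ℕ), ((n : ℝ) * x) ^ k / k ! / n ! :=
        (summable_natCast_mul_pow_div_factorial x).tsum_comm
          (f := fun (n k : ℕ) => ((n : ℝ) * x) ^ k / k ! / n !)
    _ = ∑' n : ℕ, Real.exp x ^ n / n ! := by
        refine tsum_congr fun n => ?_
        rw [tsum_div_const, ← Real.exp_eq_tsum_pow_div_factorial, Real.exp_nat_mul]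
    _ = Real.exp (Real.exp x) := (Real.exp_eq_tsum_pow_div_factorial _).symm
end

section
/- Faà di Bruno's formula: if f and h are n-times continuously differentiable real functions, then the n-th derivative of the composition f ∘ h at t equals Σ_{k=1}^{n} f^{(k)}(h(t)) · B_{n,k}(h'(t), h''(t), ..., h^{(n-k+1)}(t)), where B_{n,k} denotes the partial Bell polynomial. -/
open Finset

/-- The partial Bell polynomial B_{n,k}(x_1,…,x_{n-k+1}). -/
noncomputable def bellPoly (n k : ℕ) (x : ℕ → ℝ) : ℝ :=
  ∑ ℓ ∈ (Fintype.piFinset (fun _ : Fin (n - k + 1) => Finset.range (n + 1))).filter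
      (fun ℓ => (∑ i, (i.1 + 1) * ℓ i) = n ∧ (∑ i, ℓ i) = k),
    (Nat.factorial n : ℝ) / (∏ i, (Nat.factorial (ℓ i) : ℝ)) *
      ∏ i, (x (i.1 + 1) / (Nat.factorial (i.1 + 1) : ℝ)) ^ ℓ i

/-!
Write `(f ∘ h)^(m+1) = ((f' ∘ h) · h')^(m)` and expand by Leibniz's rule. Applying the formula
(including the term `k = 0`, where `B_{n,0} = [n = 0]`) to `f' ∘ h` at the lower orders reduces
the claim to the recurrence `B_{m+1,k+1} = ∑_j C(m,j) x_{m+1-j} B_{j,k}`. That recurrence comes from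
weighting each term of `B_{m+1,k+1}` by `∑_i (i + 1) ℓ_i / (m + 1) = 1` and removing one part of
size `i + 1` from the partition encoded by `ℓ`.
-/

open Nat

@[to_additive]
theorem Finset.prod_apply_update {ι M : Type*} [Fintype ι] [DecidableEq ι] [CommMonoid M]
    (g : ι → ℕ → M) (ℓ : ι → ℕ) (i : ι) (m : ℕ) :
    ∏ a, g a (Function.update ℓ i m a) = g i m * ∏ a ∈ univ \ {i}, g a (ℓ a) := by
  rw [← prod_update_of_mem (mem_univ i)]
  exact prod_congr rfl fun a _ => Function.apply_update (fun a => g a) ℓ i m a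

namespace BellPolynomial

/-- `ℓ i` is the number of parts of size `i + 1` in a partition of `n` into `k` parts. -/
def bellIndex (N n k : ℕ) : Finset (Fin N → ℕ) :=
  (Fintype.piFinset fun _ : Fin N => range (n + 1)).filter
    fun ℓ => (∑ i, (i.1 + 1) * ℓ i) = n ∧ (∑ i, ℓ i) = k

noncomputable def bellTerm {N : ℕ} (n : ℕ) (x : ℕ → ℝ) (ℓ : Fin N → ℕ) : ℝ :=
  (n ! : ℝ) / (∏ i, ((ℓ i)! : ℝ)) * ∏ i, (x (i.1 + 1) / ((i.1 + 1)! : ℝ)) ^ ℓ i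

noncomputable def bellSum (N n k : ℕ) (x : ℕ → ℝ) : ℝ :=
  ∑ ℓ ∈ bellIndex N n k, bellTerm n x ℓ

theorem bellPoly_eq_bellSum (n k : ℕ) (x : ℕ → ℝ) :
    bellPoly n k x = bellSum (n - k + 1) n k x := rfl

variable {N n k : ℕ}

theorem mem_bellIndex {ℓ : Fin N → ℕ} :
    ℓ ∈ bellIndex N n k ↔ (∑ i, (i.1 + 1) * ℓ i) = n ∧ (∑ i, ℓ i) = k := by
  refine ⟨fun h => (mem_filter.mp h).2, fun h => mem_filter.mpr ⟨?_, h⟩⟩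
  refine Fintype.mem_piFinset.mpr fun i => mem_range.mpr ?_
  have := single_le_sum (fun j _ => Nat.zero_le ((j.1 + 1) * ℓ j)) (mem_univ i)
  nlinarith

theorem sum_le_weighted_sum (ℓ : Fin N → ℕ) : (∑ i, ℓ i) ≤ ∑ i, (i.1 + 1) * ℓ i :=
  sum_le_sum fun i _ => Nat.le_mul_of_pos_left _ i.1.succ_pos

theorem bellIndex_eq_empty_of_lt (h : n < k) : bellIndex N n k = ∅ :=
  eq_empty_of_forall_notMem fun ℓ hℓ => by
    have := sum_le_weighted_sum ℓ
    rw [mem_bellIndex] at hℓ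
    omega

theorem bellIndex_succ_zero : bellIndex N (n + 1) 0 = ∅ :=
  eq_empty_of_forall_notMem fun ℓ hℓ => by
    rw [mem_bellIndex, sum_eq_zero_iff] at hℓ
    simp [hℓ.2] at hℓ

/-- A part of size `a + 1` leaves `k - 1` parts of size at least one, so `a ≤ n - k`. -/
theorem apply_eq_zero_of_mem_bellIndex {ℓ : Fin N → ℕ} (hℓ : ℓ ∈ bellIndex N n k) (a : Fin N)
    (ha : n - k < a) : ℓ a = 0 := by
  rw [mem_bellIndex] at hℓ
  have hsplit : (∑ i, (i.1 + 1) * ℓ i) = (∑ i : Fin N, i.1 * ℓ i) + ∑ i, ℓ i := by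
    rw [← sum_add_distrib]; exact sum_congr rfl fun i _ => by ring
  have := single_le_sum (fun i _ => Nat.zero_le (i.1 * ℓ i)) (mem_univ a)
  by_contra h
  have : a.1 ≤ a.1 * ℓ a := Nat.le_mul_of_pos_right _ (Nat.pos_of_ne_zero h)
  omega

theorem update_mem_bellIndex_iff {ℓ : Fin N → ℕ} {m : ℕ} (i : Fin N) :
    Function.update ℓ i (ℓ i + 1) ∈ bellIndex N (m + (i + 1)) (k + 1) ↔ ℓ ∈ bellIndex N m k := by
  have hw := sum_apply_update (fun a (v : ℕ) => (a.1 + 1) * v) ℓ i (ℓ i + 1)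
  have hw' := sum_apply_update (fun a (v : ℕ) => (a.1 + 1) * v) ℓ i (ℓ i)
  have hc := sum_apply_update (fun _ (v : ℕ) => v) ℓ i (ℓ i + 1)
  have hc' := sum_apply_update (fun _ (v : ℕ) => v) ℓ i (ℓ i)
  simp only [Function.update_eq_self] at hw hw' hc hc'
  rw [mem_bellIndex, mem_bellIndex, hw, hc, hw', hc']
  constructor <;> rintro ⟨h₁, h₂⟩ <;> constructor <;> linarith

theorem sum_bellIndex_eq_sum_update {m : ℕ} (i : Fin N) (hm : m + (i + 1) = n)
    {G : (Fin N → ℕ) → ℝ} (hG : ∀ ℓ, ℓ i = 0 → G ℓ = 0) :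
    ∑ ℓ ∈ bellIndex N n (k + 1), G ℓ =
      ∑ ℓ ∈ bellIndex N m k, G (Function.update ℓ i (ℓ i + 1)) := by
  subst hm
  symm
  refine sum_bij_ne_zero (fun ℓ _ _ => Function.update ℓ i (ℓ i + 1))
    (fun ℓ hℓ _ => (update_mem_bellIndex_iff i).mpr hℓ) ?_ ?_ (fun _ _ _ => rfl)
  · intro ℓ₁ _ _ ℓ₂ _ _ h
    funext a
    rcases eq_or_ne a i with rfl | ha
    · simpa using congrFun h a
    · simpa [ha] using congrFun h a
  · intro ℓ hℓ hG0
    have hi : ℓ i ≠ 0 := fun h => hG0 (hG ℓ h)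
    have hℓ' : Function.update (Function.update ℓ i (ℓ i - 1)) i
        (Function.update ℓ i (ℓ i - 1) i + 1) = ℓ := by
      simp [Nat.sub_add_cancel (Nat.pos_of_ne_zero hi)]
    refine ⟨Function.update ℓ i (ℓ i - 1), ?_, ?_, hℓ'⟩
    · rw [← update_mem_bellIndex_iff, hℓ']; exact hℓ
    · rw [hℓ']; exact hG0

theorem bellTerm_update (x : ℕ → ℝ) (ℓ : Fin N → ℕ) (i : Fin N) (hi : i.1 ≤ n) :
    ((i.1 + 1) * (ℓ i + 1) : ℝ) / (n + 1) * bellTerm (n + 1) x (Function.update ℓ i (ℓ i + 1)) =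
      n.choose i * x (i + 1) * bellTerm (n - i) x ℓ := by
  simp only [bellTerm]
  rw [prod_apply_update (fun _ v => (v ! : ℝ)) ℓ i,
    prod_apply_update (fun a v => (x (a.1 + 1) / ((a.1 + 1)! : ℝ)) ^ v) ℓ i,
    prod_eq_mul_prod_sdiff_singleton_of_mem (mem_univ i) (fun a => ((ℓ a)! : ℝ)),
    prod_eq_mul_prod_sdiff_singleton_of_mem (mem_univ i)
      (fun a => (x (a.1 + 1) / ((a.1 + 1)! : ℝ)) ^ ℓ a)]
  set P := ∏ a ∈ univ \ {i}, (x (a.1 + 1) / ((a.1 + 1)! : ℝ)) ^ ℓ a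
  set R := ∏ a ∈ univ \ {i}, ((ℓ a)! : ℝ)
  have hR : R ≠ 0 := prod_ne_zero_iff.mpr fun a _ => by positivity
  have hchoose : (n.choose i : ℝ) * (i.1 ! : ℝ) * ((n - i)! : ℝ) = n ! := by
    exact_mod_cast Nat.choose_mul_factorial_mul_factorial hi
  rw [pow_succ, Nat.factorial_succ n, Nat.factorial_succ (ℓ i), Nat.factorial_succ i.1]
  push_cast
  rw [← hchoose]
  field_simp

theorem bellSum_succ_succ (n k : ℕ) (x : ℕ → ℝ) :
    bellSum (n + 1) (n + 1) (k + 1) x =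
      ∑ i : Fin (n + 1), n.choose i * x (i + 1) * bellSum (n + 1) (n - i) k x := by
  have hi (i : Fin (n + 1)) : i.1 ≤ n := Nat.lt_succ_iff.mp i.2
  calc bellSum (n + 1) (n + 1) (k + 1) x
      = ∑ ℓ ∈ bellIndex (n + 1) (n + 1) (k + 1), ∑ i : Fin (n + 1),
          ((i.1 + 1) * ℓ i : ℝ) / (n + 1) * bellTerm (n + 1) x ℓ := by
        refine sum_congr rfl fun ℓ hℓ => ?_
        have hw : (∑ i : Fin (n + 1), ((i.1 + 1) * ℓ i : ℝ)) = n + 1 := by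
          exact_mod_cast (mem_bellIndex.mp hℓ).1
        rw [← sum_mul, ← sum_div, hw, div_self (by positivity), one_mul]
    _ = ∑ i : Fin (n + 1), ∑ ℓ ∈ bellIndex (n + 1) (n - i) k,
          ((i.1 + 1) * (ℓ i + 1) : ℝ) / (n + 1) *
            bellTerm (n + 1) x (Function.update ℓ i (ℓ i + 1)) := by
        rw [sum_comm]
        refine sum_congr rfl fun i _ => ?_
        rw [sum_bellIndex_eq_sum_update (m := n - i) i (by have := hi i; omega)
          fun ℓ h => by simp [h]]
        simp
    _ = _ := by
        refine sum_congr rfl fun i _ => ?_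
        simp only [bellTerm_update x _ i (hi i), bellSum, mul_sum]

theorem snoc_zero_mem_bellIndex_iff {ℓ : Fin N → ℕ} :
    (Fin.snoc ℓ 0 : Fin (N + 1) → ℕ) ∈ bellIndex (N + 1) n k ↔ ℓ ∈ bellIndex N n k := by
  simp [mem_bellIndex, Fin.sum_univ_castSucc]

theorem bellTerm_snoc_zero (x : ℕ → ℝ) (ℓ : Fin N → ℕ) :
    bellTerm n x (Fin.snoc ℓ 0 : Fin (N + 1) → ℕ) = bellTerm n x ℓ := by
  simp [bellTerm, Fin.prod_univ_castSucc]

theorem snoc_init_of_mem_bellIndex {ℓ : Fin (N + 1) → ℕ} (hℓ : ℓ ∈ bellIndex (N + 1) n k)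
    (hN : n - k < N) : Fin.snoc (Fin.init ℓ) 0 = ℓ := by
  rw [← apply_eq_zero_of_mem_bellIndex hℓ (Fin.last N) hN, Fin.snoc_init_self]

theorem bellSum_succ_width (hN : n - k < N) (x : ℕ → ℝ) :
    bellSum (N + 1) n k x = bellSum N n k x := by
  refine sum_nbij' Fin.init (fun ℓ => Fin.snoc ℓ 0) (fun ℓ hℓ => ?_)
    (fun ℓ hℓ => snoc_zero_mem_bellIndex_iff.mpr hℓ)
    (fun ℓ hℓ => snoc_init_of_mem_bellIndex hℓ hN) (fun ℓ _ => Fin.init_snoc _ _) (fun ℓ hℓ => ?_)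
  · rw [← snoc_zero_mem_bellIndex_iff, snoc_init_of_mem_bellIndex hℓ hN]
    exact hℓ
  · conv_lhs => rw [← snoc_init_of_mem_bellIndex hℓ hN]
    exact bellTerm_snoc_zero x _

theorem bellSum_eq_bellPoly (hN : n - k < N) (x : ℕ → ℝ) : bellSum N n k x = bellPoly n k x := by
  induction N, hN using Nat.le_induction with
  | base => rfl
  | succ N hN ih => rw [bellSum_succ_width hN, ih]

theorem bellPoly_succ_succ (n k : ℕ) (x : ℕ → ℝ) :
    bellPoly (n + 1) (k + 1) x =
      ∑ j ∈ range (n + 1), n.choose j * x (n + 1 - j) * bellPoly j k x := by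
  rw [← bellSum_eq_bellPoly (N := n + 1) (by omega), bellSum_succ_succ,
    Fin.sum_univ_eq_sum_range (fun i => n.choose i * x (i + 1) * bellSum (n + 1) (n - i) k x),
    ← sum_range_reflect]
  refine sum_congr rfl fun j hj => ?_
  have hj : j ≤ n := Nat.lt_succ_iff.mp (mem_range.mp hj)
  rw [Nat.add_sub_cancel, Nat.choose_symm (by omega), Nat.sub_sub_self hj,
    show n - j + 1 = n + 1 - j by omega, bellSum_eq_bellPoly (by omega)]

theorem bellPoly_eq_zero_of_lt (h : n < k) (x : ℕ → ℝ) : bellPoly n k x = 0 := by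
  simp [bellPoly_eq_bellSum, bellSum, bellIndex_eq_empty_of_lt h]

theorem bellPoly_succ_zero (n : ℕ) (x : ℕ → ℝ) : bellPoly (n + 1) 0 x = 0 := by
  simp [bellPoly_eq_bellSum, bellSum, bellIndex_succ_zero]

theorem bellPoly_zero_zero (x : ℕ → ℝ) : bellPoly 0 0 x = 1 := by
  simp [bellPoly, Finset.filter_singleton]

end BellPolynomial

open BellPolynomial

theorem iteratedDeriv_comp_eq_sum_bellPoly {n : ℕ} {f h : ℝ → ℝ} (hf : ContDiff ℝ n f)
    (hh : ContDiff ℝ n h) (t : ℝ) :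
    iteratedDeriv n (f ∘ h) t =
      ∑ k ∈ range (n + 1), iteratedDeriv k f (h t) * bellPoly n k (iteratedDeriv · h t) := by
  induction n using Nat.strong_induction_on generalizing f with
  | _ n ih =>
  rcases n with _ | m
  · simp [bellPoly_zero_zero]
  have hf' : ContDiff ℝ m (deriv f) := hf.deriv'
  have hh' : ContDiff ℝ m (deriv h) := hh.deriv'
  have hchain : deriv (f ∘ h) = (deriv f ∘ h) * deriv h := funext fun s =>
    deriv_comp s (hf.differentiable (by simp) _) (hh.differentiable (by simp) _)
  have hterm (i : ℕ) (hi : i ∈ range (m + 1)) :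
      m.choose i * iteratedDeriv i (deriv f ∘ h) t * iteratedDeriv (m - i) (deriv h) t =
        ∑ k ∈ range (m + 1), iteratedDeriv (k + 1) f (h t) *
          (m.choose i * iteratedDeriv (m + 1 - i) h t * bellPoly i k (iteratedDeriv · h t)) := by
    have hi : i ≤ m := Nat.lt_succ_iff.mp (mem_range.mp hi)
    rw [ih i (by omega) (hf'.of_le (by exact_mod_cast hi))
        (hh.of_le (by exact_mod_cast hi.trans m.le_succ)),
      ← sum_subset (range_subset_range.mpr (by omega : i + 1 ≤ m + 1)) fun k hk hki => by
        simp [bellPoly_eq_zero_of_lt (by simp_all : i < k)],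
      mul_sum, sum_mul]
    refine sum_congr rfl fun k _ => ?_
    rw [← iteratedDeriv_succ', ← iteratedDeriv_succ', show m - i + 1 = m + 1 - i by omega]
    ring
  rw [iteratedDeriv_succ', hchain,
    iteratedDeriv_mul ((hf'.comp (hh.of_le (by simp))).contDiffAt) hh'.contDiffAt,
    sum_congr rfl hterm, sum_comm, sum_range_succ' _ (m + 1), bellPoly_succ_zero, mul_zero,
    add_zero]
  refine sum_congr rfl fun k _ => ?_
  rw [← mul_sum, bellPoly_succ_succ]

theorem faa_di_bruno (n : ℕ) (hn : 1 ≤ n) (f h : ℝ → ℝ)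
    (hf : ContDiff ℝ n f) (hh : ContDiff ℝ n h) (t : ℝ) :
    iteratedDeriv n (f ∘ h) t =
      ∑ k ∈ Finset.Icc 1 n,
        iteratedDeriv k f (h t) * bellPoly n k (fun i => iteratedDeriv i h t) := by
  obtain ⟨m, rfl⟩ := Nat.exists_eq_add_of_le' hn
  rw [iteratedDeriv_comp_eq_sum_bellPoly hf hh, sum_range_succ', bellPoly_succ_zero, mul_zero,
    add_zero, range_eq_Ico, sum_Ico_add' (fun k => iteratedDeriv k f (h t) *
      bellPoly (m + 1) k (iteratedDeriv · h t)), zero_add, Ico_add_one_right_eq_Icc]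
end
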